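/- Let σ = (λ₁,...,λ₅) be real numbers with λ₁ ≥ λ₂ ≥ λ₃ ≥ λ₄ ≥ λ₅ ≥ -λ₁, e₁(σ) ≥ 0 and λ₃ > e₁(σ). Suppose g is a real root of Q_σ(z) = 2z³ - 2(λ₃+λ₅)z² - (e₂(σ)+(λ₃-λ₅)²)z + e₃(σ) + e₁(σ)(λ₃²+λ₅²) with 0 ≤ g ≤ e₁(σ)/2. Then the matrix B(σ,g) is entrywise nonnegative, and hence σ is the spectrum of a 5×5 symmetric nonnegative matrix. -/

import Mathlib

/-!
`B(σ, g)` commutes with the involution swapping the coordinates `0 ↔ 3` and `1 ↔ 4`. On the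
antisymmetric vectors it acts as `[[g, √l], [√l, -k]]`, whose characteristic polynomial is
`(X - λ₃)(X - λ₅)` for every `g`; on the symmetric vectors it acts as
`[[g, √l, √m], [√l, k, 0], [2√m, 0, e₁ - 2g]]`, whose characteristic polynomial is
`(X - λ₁)(X - λ₂)(X - λ₄)` exactly when `Q_σ(g) = 0`.

The entries are nonnegative because `λ₃ + λ₅ < 0` (so `k ≥ 0`), `λ₅ < 0 ≤ g < λ₃` (so `l ≥ 0`)
and `e₂(σ) + λ₃² + λ₅² ≤ 0` (so `m ≥ g (e₁ - g) ≥ 0`).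
-/

open Polynomial

/-- The real matrix pattern `B(σ, g)` of the paper (with real square roots). -/
noncomputable def patternBR (l1 l2 l3 l4 l5 g : ℝ) : Matrix (Fin 5) (Fin 5) ℝ :=
  let e1 : ℝ := l1 + l2 + l3 + l4 + l5
  let e2 : ℝ := l1*l2+l1*l3+l1*l4+l1*l5+l2*l3+l2*l4+l2*l5+l3*l4+l3*l5+l4*l5
  let k : ℝ := g - l3 - l5
  let l : ℝ := (g - l3) * (l5 - g)
  let m : ℝ := -g^2 + e1 * g - (1/2) * (e2 + l3^2 + l5^2)
  !![g, Real.sqrt l, Real.sqrt m, 0, 0;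
     Real.sqrt l, 0, 0, 0, k;
     Real.sqrt m, 0, e1 - 2*g, Real.sqrt m, 0;
     0, 0, Real.sqrt m, g, Real.sqrt l;
     0, k, 0, Real.sqrt l, 0]

section Pattern

variable {R : Type*}

def patternB [Zero R] (g s t c k : R) : Matrix (Fin 5) (Fin 5) R :=
  !![g, s, t, 0, 0;
     s, 0, 0, 0, k;
     t, 0, c, t, 0;
     0, 0, t, g, s;
     0, k, 0, s, 0]

theorem patternB_isSymm [Zero R] (g s t c k : R) : (patternB g s t c k).IsSymm := by
  ext i j
  fin_cases i <;> fin_cases j <;> rfl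

theorem patternB_nonneg [Zero R] [Preorder R] {g s t c k : R}
    (hg : 0 ≤ g) (hs : 0 ≤ s) (ht : 0 ≤ t) (hc : 0 ≤ c) (hk : 0 ≤ k) (i j : Fin 5) :
    0 ≤ patternB g s t c k i j := by
  fin_cases i <;> fin_cases j <;> first | exact le_rfl | assumption

theorem charpoly_patternB [CommRing R] (g s t c k : R) :
    (patternB g s t c k).charpoly =
      ((X - C g) * (X + C k) - C (s ^ 2)) *
        ((X - C g) * (X - C k) * (X - C c) - C (s ^ 2) * (X - C c) - 2 * C (t ^ 2) * (X - C k)) := by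
  simp [patternB, Matrix.charpoly, Matrix.charmatrix_apply, Matrix.det_succ_row_zero,
    Fin.sum_univ_succ, Fin.succAbove]
  ring

theorem quadratic_factor [CommRing R] (l3 l5 g : R) :
    (X - C g) * (X + C (g - l3 - l5)) - C ((g - l3) * (l5 - g)) = (X - C l3) * (X - C l5) := by
  simp only [map_sub, map_mul]
  ring

theorem cubic_factor [CommRing R] (l1 l2 l3 l4 l5 g m : R)
    (hm : 2 * m = -2 * g^2 + 2 * (l1 + l2 + l3 + l4 + l5) * g
        - ((l1*l2+l1*l3+l1*l4+l1*l5+l2*l3+l2*l4+l2*l5+l3*l4+l3*l5+l4*l5) + l3^2 + l5^2))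
    (hg : 2*g^3 - 2*(l3 + l5)*g^2
        - ((l1*l2+l1*l3+l1*l4+l1*l5+l2*l3+l2*l4+l2*l5+l3*l4+l3*l5+l4*l5) + (l3 - l5)^2) * g
        + (l1*l2*l3+l1*l2*l4+l1*l2*l5+l1*l3*l4+l1*l3*l5+l1*l4*l5+l2*l3*l4+l2*l3*l5+l2*l4*l5+l3*l4*l5)
        + (l1 + l2 + l3 + l4 + l5) * (l3^2 + l5^2) = 0) :
    (X - C g) * (X - C (g - l3 - l5)) * (X - C (l1 + l2 + l3 + l4 + l5 - 2 * g))
      - C ((g - l3) * (l5 - g)) * (X - C (l1 + l2 + l3 + l4 + l5 - 2 * g))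
      - 2 * C m * (X - C (g - l3 - l5))
      = (X - C l1) * (X - C l2) * (X - C l4) := by
  have hmC := congrArg C hm
  have hgC := congrArg C hg
  simp only [map_add, map_sub, map_mul, map_pow, map_ofNat, map_zero, map_neg] at hmC hgC ⊢
  linear_combination (C g - C l3 - C l5 - X) * hmC + hgC

end Pattern

/-- `2 (e₂ + λ₃² + λ₅²) = (e₁² - λ₂²) + (λ₃² - λ₄²) + (λ₅² - λ₁²)`, a sum of three nonpositive
terms. -/
theorem e2_add_sq_add_sq_nonpos {l1 l2 l3 l4 l5 : ℝ}
    (h23 : l3 ≤ l2) (h45 : l5 ≤ l4) (h5 : -l1 ≤ l5)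
    (htrace : 0 ≤ l1 + l2 + l3 + l4 + l5) (h3 : l1 + l2 + l3 + l4 + l5 < l3) :
    l1*l2+l1*l3+l1*l4+l1*l5+l2*l3+l2*l4+l2*l5+l3*l4+l3*l5+l4*l5 + l3^2 + l5^2 ≤ 0 := by
  have hl34 : l3 + l4 < 0 := by linarith
  linarith [mul_nonneg (by linarith : 0 ≤ l2 - (l1 + l2 + l3 + l4 + l5))
      (by linarith : 0 ≤ l2 + (l1 + l2 + l3 + l4 + l5)),
    mul_nonneg (by linarith : 0 ≤ l3 - l4) (by linarith : 0 ≤ -(l3 + l4)),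
    mul_nonneg (by linarith : 0 ≤ l1 - l5) (by linarith : 0 ≤ l1 + l5)]

theorem patternBR_eq (l1 l2 l3 l4 l5 g : ℝ) :
    patternBR l1 l2 l3 l4 l5 g =
      patternB g (Real.sqrt ((g - l3) * (l5 - g)))
        (Real.sqrt (-g^2 + (l1 + l2 + l3 + l4 + l5) * g - (1/2) *
          ((l1*l2+l1*l3+l1*l4+l1*l5+l2*l3+l2*l4+l2*l5+l3*l4+l3*l5+l4*l5) + l3^2 + l5^2)))
        (l1 + l2 + l3 + l4 + l5 - 2 * g) (g - l3 - l5) :=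
  rfl

theorem stmt7_general (l1 l2 l3 l4 l5 g : ℝ)
    (h23 : l2 ≥ l3) (h45 : l4 ≥ l5) (h5 : l5 ≥ -l1)
    (htrace : l1 + l2 + l3 + l4 + l5 ≥ 0)
    (h3 : l3 > l1 + l2 + l3 + l4 + l5)
    (hg : 2*g^3 - 2*(l3 + l5)*g^2
        - ((l1*l2+l1*l3+l1*l4+l1*l5+l2*l3+l2*l4+l2*l5+l3*l4+l3*l5+l4*l5) + (l3 - l5)^2) * g
        + (l1*l2*l3+l1*l2*l4+l1*l2*l5+l1*l3*l4+l1*l3*l5+l1*l4*l5+l2*l3*l4+l2*l3*l5+l2*l4*l5+l3*l4*l5)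
        + (l1 + l2 + l3 + l4 + l5) * (l3^2 + l5^2) = 0)
    (hg0 : 0 ≤ g) (hg1 : g ≤ (l1 + l2 + l3 + l4 + l5) / 2) :
    (∀ i j, 0 ≤ patternBR l1 l2 l3 l4 l5 g i j) ∧
    ∃ A : Matrix (Fin 5) (Fin 5) ℝ, A.IsSymm ∧ (∀ i j, 0 ≤ A i j) ∧
      A.charpoly = (X - C l1) * (X - C l2) * (X - C l3) * (X - C l4) * (X - C l5) := by
  have he2 := e2_add_sq_add_sq_nonpos h23 h45 h5 htrace h3
  have hk : 0 ≤ g - l3 - l5 := by linarith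
  have hc : 0 ≤ l1 + l2 + l3 + l4 + l5 - 2 * g := by linarith
  have hl : 0 ≤ (g - l3) * (l5 - g) := mul_nonneg_of_nonpos_of_nonpos (by linarith) (by linarith)
  have hm : 0 ≤ -g^2 + (l1 + l2 + l3 + l4 + l5) * g - (1/2) *
      ((l1*l2+l1*l3+l1*l4+l1*l5+l2*l3+l2*l4+l2*l5+l3*l4+l3*l5+l4*l5) + l3^2 + l5^2) := by
    linarith [mul_nonneg hg0 (by linarith : 0 ≤ l1 + l2 + l3 + l4 + l5 - g)]
  have hnonneg : ∀ i j, 0 ≤ patternBR l1 l2 l3 l4 l5 g i j := by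
    rw [patternBR_eq]
    exact patternB_nonneg hg0 (Real.sqrt_nonneg _) (Real.sqrt_nonneg _) hc hk
  refine ⟨hnonneg, _, patternBR_eq .. ▸ patternB_isSymm .., hnonneg, ?_⟩
  rw [patternBR_eq, charpoly_patternB, Real.sq_sqrt hl, Real.sq_sqrt hm, quadratic_factor,
    cubic_factor l1 l2 l3 l4 l5 g _ (by ring) hg]
  ring

theorem stmt7 (l1 l2 l3 l4 l5 g : ℝ)
    (h12 : l1 ≥ l2) (h23 : l2 ≥ l3) (h34 : l3 ≥ l4) (h45 : l4 ≥ l5) (h5 : l5 ≥ -l1)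
    (htrace : l1 + l2 + l3 + l4 + l5 ≥ 0)
    (h3 : l3 > l1 + l2 + l3 + l4 + l5)
    (hg : 2*g^3 - 2*(l3 + l5)*g^2
        - ((l1*l2+l1*l3+l1*l4+l1*l5+l2*l3+l2*l4+l2*l5+l3*l4+l3*l5+l4*l5) + (l3 - l5)^2) * g
        + (l1*l2*l3+l1*l2*l4+l1*l2*l5+l1*l3*l4+l1*l3*l5+l1*l4*l5+l2*l3*l4+l2*l3*l5+l2*l4*l5+l3*l4*l5)
        + (l1 + l2 + l3 + l4 + l5) * (l3^2 + l5^2) = 0)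
    (hg0 : 0 ≤ g) (hg1 : g ≤ (l1 + l2 + l3 + l4 + l5) / 2) :
    (∀ i j, 0 ≤ patternBR l1 l2 l3 l4 l5 g i j) ∧
    ∃ A : Matrix (Fin 5) (Fin 5) ℝ, A.IsSymm ∧ (∀ i j, 0 ≤ A i j) ∧
      A.charpoly = (X - C l1) * (X - C l2) * (X - C l3) * (X - C l4) * (X - C l5) :=
  stmt7_general l1 l2 l3 l4 l5 g h23 h45 h5 htrace h3 hg hg0 hg1
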